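/- For n ≥ 1, F(A_{n+1}, f_{2n} − 1) = F(B_{n+1}, f_{2n} − 1); that is, the set of sub-words of length f_{2n} − 1 of words in A_{n+1} equals the set of sub-words of length f_{2n} − 1 of words in B_{n+1}. -/
import Mathlib


/-- The two-letter alphabet. -/
inductive Letter : Type
  | a : Letter
  | b : Letter
deriving DecidableEq

/-- A word is a finite sequence of letters. -/
abbrev Word := List Letter

/-- Concatenation set `UV = {uv : u ∈ U, v ∈ V}`. -/
def concatSet (U V : Set Word) : Set Word := {w | ∃ u ∈ U, ∃ v ∈ V, w = u ++ v}

mutual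
  /-- The sets `A_n` of inflated words (indexed so that `Aset 1 = {a}`). -/
  def Aset : ℕ → Set Word
    | 0 => ∅
    | 1 => {[Letter.a]}
    | n + 2 => concatSet (Bset (n + 1)) (concatSet (Aset (n + 1)) (Aset (n + 1)))
  /-- The sets `B_n` of inflated words (indexed so that `Bset 1 = {b}`). -/
  def Bset : ℕ → Set Word
    | 0 => ∅
    | 1 => {[Letter.b]}
    | n + 2 => concatSet (Aset (n + 1)) (Bset (n + 1)) ∪ concatSet (Bset (n + 1)) (Aset (n + 1))
end

/-- The sub-word `w[a,b] = w_a w_{a+1} … w_b` (1-indexed). -/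
def wordSlice (w : Word) (i j : ℕ) : Word := (w.drop (i - 1)).take (j - i + 1)

/-- `W[a,b] = {w[a,b] : w ∈ W}`. -/
def setSlice (W : Set Word) (i j : ℕ) : Set Word := {x | ∃ w ∈ W, x = wordSlice w i j}

/-- `x` is a sub-word (contiguous factor) of `w`. -/
def IsFactor (x w : Word) : Prop := ∃ u v : Word, w = u ++ x ++ v

/-- `F(S, m)`: the set of all sub-words of length `m` of words in `S`. -/
def FactorSet (S : Set Word) (m : ℕ) : Set Word :=
  {x | x.length = m ∧ ∃ w ∈ S, IsFactor x w}

/-- `F(A, m) = ⋃_{n ≥ 1} F(A_n, m)`. -/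
def FA (m : ℕ) : Set Word := ⋃ n ∈ {n : ℕ | 1 ≤ n}, FactorSet (Aset n) m

/-- `F(B, m) = ⋃_{n ≥ 1} F(B_n, m)`. -/
def FB (m : ℕ) : Set Word := ⋃ n ∈ {n : ℕ | 1 ≤ n}, FactorSet (Bset n) m

/-- The golden mean `τ = (1 + √5)/2`. -/
noncomputable def tau : ℝ := (1 + Real.sqrt 5) / 2

/-! ### Auxiliary material for the proof -/

namespace FibAux

open List

/-! #### membership constructors / destructors -/

lemma mem_concatSet {U V : Set Word} {u v : Word} (hu : u ∈ U) (hv : v ∈ V) :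
    u ++ v ∈ concatSet U V := ⟨u, hu, v, hv, rfl⟩

lemma memA_succ {n : ℕ} {b x y : Word} (hb : b ∈ Bset (n+1)) (hx : x ∈ Aset (n+1))
    (hy : y ∈ Aset (n+1)) : b ++ (x ++ y) ∈ Aset (n+2) := by
  rw [Aset]; exact mem_concatSet hb (mem_concatSet hx hy)

lemma memB_succ_left {n : ℕ} {x b : Word} (hx : x ∈ Aset (n+1)) (hb : b ∈ Bset (n+1)) :
    x ++ b ∈ Bset (n+2) := by
  rw [Bset]; exact Or.inl (mem_concatSet hx hb)

lemma memB_succ_right {n : ℕ} {b x : Word} (hb : b ∈ Bset (n+1)) (hx : x ∈ Aset (n+1)) :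
    b ++ x ∈ Bset (n+2) := by
  rw [Bset]; exact Or.inr (mem_concatSet hb hx)

lemma destructA {n : ℕ} {a : Word} (ha : a ∈ Aset (n+2)) :
    ∃ b x y, b ∈ Bset (n+1) ∧ x ∈ Aset (n+1) ∧ y ∈ Aset (n+1) ∧ a = b ++ (x ++ y) := by
  rw [Aset] at ha
  obtain ⟨b, hb, v, ⟨x, hx, y, hy, rfl⟩, rfl⟩ := ha
  exact ⟨b, x, y, hb, hx, hy, rfl⟩

lemma destructB {n : ℕ} {b : Word} (hb : b ∈ Bset (n+2)) :
    (∃ x c, x ∈ Aset (n+1) ∧ c ∈ Bset (n+1) ∧ b = x ++ c) ∨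
    (∃ c x, c ∈ Bset (n+1) ∧ x ∈ Aset (n+1) ∧ b = c ++ x) := by
  rw [Bset] at hb
  rcases hb with ⟨x, hx, c, hc, rfl⟩ | ⟨c, hc, x, hx, rfl⟩
  · exact Or.inl ⟨x, c, hx, hc, rfl⟩
  · exact Or.inr ⟨c, x, hc, hx, rfl⟩

/-! #### lengths and nonemptiness -/

lemma len_joint : ∀ n : ℕ, (∀ w ∈ Aset (n+1), w.length = Nat.fib (2*n+2)) ∧
    (∀ w ∈ Bset (n+1), w.length = Nat.fib (2*n+1)) := by
  intro n
  induction n with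
  | zero =>
    constructor
    · intro w hw
      rw [Aset] at hw
      simp only [Set.mem_singleton_iff] at hw
      simp [hw]
    · intro w hw
      rw [Bset] at hw
      simp only [Set.mem_singleton_iff] at hw
      simp [hw]
  | succ k ih =>
    obtain ⟨ihA, ihB⟩ := ih
    have e1 : Nat.fib (2*k+2+2) = Nat.fib (2*k+2) + Nat.fib (2*k+3) := Nat.fib_add_two
    have e2 : Nat.fib (2*k+1+2) = Nat.fib (2*k+1) + Nat.fib (2*k+2) := Nat.fib_add_two
    constructor
    · intro w hw
      obtain ⟨b, x, y, hb, hx, hy, rfl⟩ := destructA hw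
      simp only [List.length_append, ihB b hb, ihA x hx, ihA y hy]
      have h3 : 2*(k+1)+2 = 2*k+2+2 := by ring
      rw [h3, e1]
      have h4 : 2*k+3 = 2*k+1+2 := by ring
      rw [h4, e2]
      try omega
    · intro w hw
      have hgoal : 2*(k+1)+1 = 2*k+1+2 := by ring
      rcases destructB hw with ⟨x, c, hx, hc, rfl⟩ | ⟨c, x, hc, hx, rfl⟩ <;>
      · simp only [List.length_append, ihA _ ‹_ ∈ Aset (k+1)›, ihB _ ‹_ ∈ Bset (k+1)›]
        rw [hgoal, e2]
        try omega

lemma lenA {n : ℕ} {w : Word} (hw : w ∈ Aset (n+1)) : w.length = Nat.fib (2*n+2) :=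
  (len_joint n).1 w hw

lemma lenB {n : ℕ} {w : Word} (hw : w ∈ Bset (n+1)) : w.length = Nat.fib (2*n+1) :=
  (len_joint n).2 w hw

lemma nonempty_joint : ∀ n : ℕ, (Aset (n+1)).Nonempty ∧ (Bset (n+1)).Nonempty := by
  intro n
  induction n with
  | zero =>
    constructor
    · exact ⟨[Letter.a], by rw [Aset]; rfl⟩
    · exact ⟨[Letter.b], by rw [Bset]; rfl⟩
  | succ k ih =>
    obtain ⟨⟨a, ha⟩, ⟨b, hb⟩⟩ := ih
    exact ⟨⟨_, memA_succ hb ha ha⟩, ⟨_, memB_succ_left ha hb⟩⟩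

lemma nonemptyA (n : ℕ) : (Aset (n+1)).Nonempty := (nonempty_joint n).1
lemma nonemptyB (n : ℕ) : (Bset (n+1)).Nonempty := (nonempty_joint n).2

/-! #### list toolkit -/

lemma suffix_append_left {s V : Word} (h : s <:+ V) (U : Word) : s <:+ U ++ V := by
  obtain ⟨t, rfl⟩ := h
  exact ⟨U ++ t, by simp⟩

lemma prefix_append_right {t U : Word} (h : t <+: U) (V : Word) : t <+: U ++ V :=
  h.trans (List.prefix_append U V)

lemma prefix_append_prefix {t v : Word} (h : t <+: v) (u : Word) : u ++ t <+: u ++ v := by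
  obtain ⟨d, rfl⟩ := h
  exact ⟨d, by simp⟩

lemma append_suffix_append {s u : Word} (h : s <:+ u) (v : Word) : s ++ v <:+ u ++ v := by
  obtain ⟨t, rfl⟩ := h
  exact ⟨t, by simp⟩

lemma suffix_shrink {s U V : Word} (h : s <:+ U ++ V) (hl : s.length ≤ V.length) : s <:+ V := by
  obtain ⟨t, ht⟩ := h
  have hlen : t.length + s.length = U.length + V.length := by
    have := congrArg List.length ht
    simpa using this
  have h2 : (t ++ s).drop U.length = (U ++ V).drop U.length := by rw [ht]
  rw [List.drop_append, Nat.sub_eq_zero_of_le (by omega : U.length ≤ t.length),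
    List.drop_zero, List.drop_left] at h2
  exact ⟨t.drop U.length, h2⟩

lemma suffix_split {s U V : Word} (h : s <:+ U ++ V) (hl : V.length ≤ s.length) :
    ∃ s', s = s' ++ V ∧ s' <:+ U := by
  obtain ⟨t, ht⟩ := h
  have hlen : t.length + s.length = U.length + V.length := by
    have := congrArg List.length ht
    simpa using this
  have htU : t.length ≤ U.length := by omega
  have hd : (t ++ s).drop U.length = (U ++ V).drop U.length := by rw [ht]
  rw [List.drop_append, List.drop_of_length_le htU, List.nil_append,
    List.drop_left] at hd
  have htk : (t ++ s).take U.length = (U ++ V).take U.length := by rw [ht]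
  rw [List.take_append, List.take_of_length_le htU, List.take_left] at htk
  refine ⟨s.take (U.length - t.length), ?_, ⟨t, htk⟩⟩
  conv_lhs => rw [← List.take_append_drop (U.length - t.length) s]
  rw [hd]

lemma prefix_shrink {t U V : Word} (h : t <+: U ++ V) (hl : t.length ≤ U.length) : t <+: U := by
  obtain ⟨r, hr⟩ := h
  have hk : (t ++ r).take t.length = (U ++ V).take t.length := by rw [hr]
  rw [List.take_left, List.take_append, Nat.sub_eq_zero_of_le hl,
    List.take_zero, List.append_nil] at hk
  rw [hk]
  exact List.take_prefix _ _

lemma prefix_split {t U V : Word} (h : t <+: U ++ V) (hl : U.length ≤ t.length) :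
    ∃ t', t = U ++ t' ∧ t' <+: V := by
  obtain ⟨r, hr⟩ := h
  have hk : (t ++ r).take U.length = (U ++ V).take U.length := by rw [hr]
  rw [List.take_append, Nat.sub_eq_zero_of_le hl,
    List.take_zero, List.append_nil, List.take_left] at hk
  have hd : (t ++ r).drop U.length = (U ++ V).drop U.length := by rw [hr]
  rw [List.drop_append, Nat.sub_eq_zero_of_le hl, List.drop_zero,
    List.drop_left] at hd
  refine ⟨t.drop U.length, ?_, ⟨r, hd⟩⟩
  conv_lhs => rw [← List.take_append_drop U.length t]
  rw [hk]

lemma factor_trans {x y w : Word} (h1 : IsFactor x y) (h2 : IsFactor y w) : IsFactor x w := by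
  obtain ⟨u, v, rfl⟩ := h1
  obtain ⟨u', v', rfl⟩ := h2
  exact ⟨u' ++ u, v ++ v', by simp⟩

lemma factor_append {x : Word} (u v : Word) : IsFactor x (u ++ x ++ v) := ⟨u, v, rfl⟩

lemma drop_take_factor (w : Word) (i m : ℕ) : IsFactor ((w.drop i).take m) w := by
  refine ⟨w.take i, (w.drop i).drop m, ?_⟩
  rw [List.append_assoc, List.take_append_drop, List.take_append_drop]

lemma factor_iff_drop_take {x w : Word} :
    IsFactor x w ↔ ∃ i, i + x.length ≤ w.length ∧ x = (w.drop i).take x.length := by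
  constructor
  · rintro ⟨u, v, rfl⟩
    refine ⟨u.length, by simp, ?_⟩
    rw [List.append_assoc, List.drop_left, List.take_left]
  · rintro ⟨i, _, hx⟩
    rw [hx]
    exact drop_take_factor w i _

lemma window_left_eq {P R : Word} {i m : ℕ} (h : i + m ≤ P.length) :
    ((P ++ R).drop i).take m = (P.drop i).take m := by
  rw [List.drop_append, Nat.sub_eq_zero_of_le (by omega : i ≤ P.length),
    List.drop_zero, List.take_append]
  have h1 : m - (P.drop i).length = 0 := by
    rw [List.length_drop]; omega
  rw [h1, List.take_zero, List.append_nil]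

lemma infix_of_suffix_prefix {s t U V : Word} (hs : s <:+ U) (ht : t <+: V) :
    IsFactor (s ++ t) (U ++ V) := by
  obtain ⟨c, rfl⟩ := hs
  obtain ⟨d, rfl⟩ := ht
  exact ⟨c, d, by simp⟩

lemma extract_mid {P C Q x : Word} {i m : ℕ}
    (hx : x = ((P ++ (C ++ Q)).drop i).take m)
    (h1 : i ≤ P.length) (h2 : P.length + C.length ≤ i + m) :
    x = P.drop i ++ C ++ Q.take (i + m - P.length - C.length) := by
  rw [List.drop_append, Nat.sub_eq_zero_of_le h1, List.drop_zero,
    List.take_append,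
    List.take_of_length_le (by rw [List.length_drop]; omega : (P.drop i).length ≤ m),
    List.take_append,
    List.take_of_length_le (by rw [List.length_drop]; omega :
      C.length ≤ m - (P.drop i).length)] at hx
  have he : m - (P.drop i).length - C.length = i + m - P.length - C.length := by
    rw [List.length_drop]; omega
  rw [hx, he, List.append_assoc]

/-! #### Lemma S : short suffixes of A-words are suffixes of B-words -/

lemma lemS : ∀ k : ℕ, ∀ s a : Word, a ∈ Aset (k+1) → s <:+ a →
    s.length + 1 ≤ Nat.fib (2*k+1) → ∃ b ∈ Bset (k+1), s <:+ b := by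
  intro k
  induction k with
  | zero =>
    intro s a _ _ hlen
    have hs0 : s.length = 0 := by
      have h0 : Nat.fib (2*0+1) = 1 := rfl
      omega
    obtain ⟨b, hb⟩ := nonemptyB 0
    exact ⟨b, hb, by simp [List.length_eq_zero_iff.mp hs0]⟩
  | succ k ih =>
    intro s a ha hs hlen
    obtain ⟨β, α, α', hβ, hα, hα', rfl⟩ := destructA ha
    have hlα' : α'.length = Nat.fib (2*k+2) := lenA hα'
    have hlα : α.length = Nat.fib (2*k+2) := lenA hα
    have hfib : Nat.fib (2*k+3) = Nat.fib (2*k+1) + Nat.fib (2*k+2) := by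
      have : Nat.fib (2*k+1+2) = Nat.fib (2*k+1) + Nat.fib (2*k+2) := Nat.fib_add_two
      simpa using this
    have hfib2 : Nat.fib (2*k+2) = Nat.fib (2*k) + Nat.fib (2*k+1) := by
      have : Nat.fib (2*k+2) = Nat.fib (2*k) + Nat.fib (2*k+1) := Nat.fib_add_two
      exact this
    have hs' : s <:+ (β ++ α) ++ α' := by rwa [List.append_assoc]
    have hbound : s.length + 1 ≤ Nat.fib (2*(k+1)+1) := hlen
    have hbound' : s.length + 1 ≤ Nat.fib (2*k+3) := by
      have : 2*(k+1)+1 = 2*k+3 := by ring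
      rwa [this] at hbound
    by_cases hc : s.length ≤ Nat.fib (2*k+2)
    · have hsa : s <:+ α' := suffix_shrink hs' (by omega)
      obtain ⟨b0, hb0⟩ := nonemptyB k
      exact ⟨b0 ++ α', memB_succ_right hb0 hα', suffix_append_left hsa b0⟩
    · obtain ⟨s', hseq, hs'U⟩ := suffix_split hs' (by omega)
      have hls' : s'.length + Nat.fib (2*k+2) = s.length := by
        have := congrArg List.length hseq
        simp [hlα'] at this
        omega
      have hs'α : s' <:+ α := suffix_shrink hs'U (by omega)
      obtain ⟨b', hb', hsb'⟩ := ih s' α hα hs'α (by omega)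
      refine ⟨b' ++ α', memB_succ_right hb' hα', ?_⟩
      rw [hseq]
      exact append_suffix_append hsb' α'

/-! #### Lemma P' : short prefixes of A_k-words are prefixes of A_{k+1}-words -/

lemma lemP' : ∀ k : ℕ, ∀ t a : Word, a ∈ Aset (k+1) → t <+: a →
    t.length + 1 ≤ Nat.fib (2*k+2) → ∃ a' ∈ Aset (k+2), t <+: a' := by
  intro k
  induction k with
  | zero =>
    intro t a _ _ hlen
    have ht0 : t.length = 0 := by
      have h0 : Nat.fib (2*0+2) = 1 := rfl
      omega
    obtain ⟨a', ha'⟩ := nonemptyA 1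
    exact ⟨a', ha', by simp [List.length_eq_zero_iff.mp ht0]⟩
  | succ k ih =>
    intro t a ha ht hlen
    obtain ⟨β, α, α', hβ, hα, hα', rfl⟩ := destructA ha
    have hlα' : α'.length = Nat.fib (2*k+2) := lenA hα'
    have hlα : α.length = Nat.fib (2*k+2) := lenA hα
    have hlβ : β.length = Nat.fib (2*k+1) := lenB hβ
    have hfib : Nat.fib (2*k+3) = Nat.fib (2*k+1) + Nat.fib (2*k+2) := by
      have : Nat.fib (2*k+1+2) = Nat.fib (2*k+1) + Nat.fib (2*k+2) := Nat.fib_add_two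
      simpa using this
    have hfib4 : Nat.fib (2*k+4) = Nat.fib (2*k+2) + Nat.fib (2*k+3) := by
      have : Nat.fib (2*k+2+2) = Nat.fib (2*k+2) + Nat.fib (2*k+3) := Nat.fib_add_two
      simpa using this
    have hbound : t.length + 1 ≤ Nat.fib (2*k+4) := by
      have : 2*(k+1)+2 = 2*k+4 := by ring
      rwa [this] at hlen
    have ht' : t <+: (β ++ α) ++ α' := by rwa [List.append_assoc]
    have hβα : β ++ α ∈ Bset (k+2) := memB_succ_right hβ hα
    by_cases hc : t.length ≤ Nat.fib (2*k+3)
    · have htp : t <+: β ++ α := prefix_shrink ht' (by simp [hlα, hlβ]; omega)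
      obtain ⟨a1, ha1⟩ := nonemptyA (k+1)
      refine ⟨(β ++ α) ++ (a1 ++ a1), memA_succ hβα ha1 ha1, ?_⟩
      exact prefix_append_right htp _
    · obtain ⟨t', hteq, ht'V⟩ := prefix_split ht' (by
        simp only [List.length_append, hlα, hlβ]; omega)
      have hlt : t.length = Nat.fib (2*k+3) + t'.length := by
        have := congrArg List.length hteq
        simp only [List.length_append, hlα, hlβ] at this
        omega
      obtain ⟨a'', ha'', hta''⟩ := ih t' α' hα' ht'V (by omega)
      obtain ⟨a1, ha1⟩ := nonemptyA (k+1)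
      obtain ⟨astar, hastar⟩ := nonemptyA (k+1)
      refine ⟨(β ++ α) ++ (a'' ++ astar), memA_succ hβα ha'' hastar, ?_⟩
      rw [hteq]
      exact prefix_append_prefix (prefix_append_right hta'' astar) (β ++ α)


/-! #### more window helpers -/

lemma window_left_factor {P R x : Word} {i m : ℕ}
    (hx : x = ((P ++ R).drop i).take m) (h : i + m ≤ P.length) : IsFactor x P := by
  rw [window_left_eq h] at hx
  rw [hx]; exact drop_take_factor _ _ _

lemma window_right_factor {P R x : Word} {i m : ℕ}
    (hx : x = ((P ++ R).drop i).take m) (h : P.length ≤ i) : IsFactor x R := by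
  rw [List.drop_append, List.drop_of_length_le h, List.nil_append] at hx
  rw [hx]; exact drop_take_factor _ _ _

lemma take_append_left_of_le {U V : Word} {n : ℕ} (h : n ≤ U.length) :
    (U ++ V).take n = U.take n := by
  rw [List.take_append, Nat.sub_eq_zero_of_le h, List.take_zero, List.append_nil]

lemma lenA' {k : ℕ} {w : Word} (hw : w ∈ Aset (k+2)) : w.length = Nat.fib (2*k+4) := by
  have := lenA (n := k+1) hw
  have h : 2*(k+1)+2 = 2*k+4 := by ring
  rwa [h] at this

lemma lenB' {k : ℕ} {w : Word} (hw : w ∈ Bset (k+2)) : w.length = Nat.fib (2*k+3) := by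
  have := lenB (n := k+1) hw
  have h : 2*(k+1)+1 = 2*k+3 := by ring
  rwa [h] at this

/-! #### Lemma 1: factors of `A_n A_n` words are factors of `B_{n+1}` words -/

lemma lem1 {k : ℕ} {a a' x : Word} (ha : a ∈ Aset (k+2)) (ha' : a' ∈ Aset (k+2))
    (hf : IsFactor x (a ++ a')) (hlen : x.length + 1 = Nat.fib (2*k+4)) :
    ∃ w ∈ Bset (k+3), IsFactor x w := by
  obtain ⟨b₁, a₁, a₂, hb₁, ha₁, ha₂, haeq⟩ := destructA ha
  obtain ⟨b₁', a₁', a₂', hb₁', ha₁', ha₂', ha'eq⟩ := destructA ha'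
  have hla : a.length = Nat.fib (2*k+4) := lenA' ha
  have hlb₁' : b₁'.length = Nat.fib (2*k+1) := lenB hb₁'
  have hla₁' : a₁'.length = Nat.fib (2*k+2) := lenA ha₁'
  have hlb₁ : b₁.length = Nat.fib (2*k+1) := lenB hb₁
  have hla₁ : a₁.length = Nat.fib (2*k+2) := lenA ha₁
  have hfib3 : Nat.fib (2*k+3) = Nat.fib (2*k+1) + Nat.fib (2*k+2) := by
    have h : Nat.fib (2*k+1+2) = Nat.fib (2*k+1) + Nat.fib (2*k+2) := Nat.fib_add_two
    simpa using h
  rw [factor_iff_drop_take] at hf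
  obtain ⟨i, hbound, hx⟩ := hf
  by_cases hc : i + x.length ≤ Nat.fib (2*k+4) + Nat.fib (2*k+3)
  · -- window inside a · (b₁' a₁')
    have hsp : a ++ a' = (a ++ (b₁' ++ a₁')) ++ a₂' := by rw [ha'eq]; simp
    rw [hsp] at hx
    have hfac : IsFactor x (a ++ (b₁' ++ a₁')) :=
      window_left_factor hx (by simp [List.length_append, hla, hlb₁', hla₁']; omega)
    exact ⟨a ++ (b₁' ++ a₁'),
      memB_succ_left (n := k+1) ha (memB_succ_right hb₁' ha₁'), hfac⟩
  · -- window inside a₂ · a'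
    have hsp : a ++ a' = (b₁ ++ a₁) ++ (a₂ ++ a') := by rw [haeq]; simp
    rw [hsp] at hx
    have hi : (b₁ ++ a₁).length ≤ i := by
      simp only [List.length_append, hlb₁, hla₁]
      omega
    have hfac : IsFactor x (a₂ ++ a') := window_right_factor hx hi
    obtain ⟨bs, hbs⟩ := nonemptyB k
    refine ⟨(bs ++ a₂) ++ a', memB_succ_right (n := k+1) (memB_succ_right hbs ha₂) ha', ?_⟩
    exact factor_trans hfac ⟨bs, [], by simp⟩

/-! #### Lemma 2: factors of `A_n B_n` words are factors of `A_{n+1}` words -/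

lemma lem2 {k : ℕ} {a b x : Word} (ha : a ∈ Aset (k+2)) (hb : b ∈ Bset (k+2))
    (hf : IsFactor x (a ++ b)) (hlen : x.length + 1 = Nat.fib (2*k+4)) :
    ∃ w ∈ Aset (k+3), IsFactor x w := by
  obtain ⟨X, hX⟩ := nonemptyB (k+1)
  obtain ⟨a0, ha0⟩ := nonemptyA k
  have hfib3 : Nat.fib (2*k+3) = Nat.fib (2*k+1) + Nat.fib (2*k+2) := by
    have h : Nat.fib (2*k+1+2) = Nat.fib (2*k+1) + Nat.fib (2*k+2) := Nat.fib_add_two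
    simpa using h
  have hfib4 : Nat.fib (2*k+4) = Nat.fib (2*k+2) + Nat.fib (2*k+3) := by
    have h : Nat.fib (2*k+2+2) = Nat.fib (2*k+2) + Nat.fib (2*k+3) := Nat.fib_add_two
    simpa using h
  have hq'pos : 0 < Nat.fib (2*k+1) := Nat.fib_pos.mpr (by omega)
  have hmono : Nat.fib (2*k+1) ≤ Nat.fib (2*k+2) := Nat.fib_mono (by omega)
  rcases destructB hb with ⟨a₃, b₂, ha₃, hb₂, hbeq⟩ | ⟨b₂, a₃, hb₂, ha₃, hbeq⟩
  swap
  · -- b = b₂ ++ a₃ : whole word a ++ b embeds in X (a) (b₂ a₃ a0)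
    refine ⟨X ++ (a ++ (b₂ ++ (a₃ ++ a0))),
      memA_succ (n := k+1) hX ha (memA_succ hb₂ ha₃ ha0), ?_⟩
    refine factor_trans hf ⟨X, a0, ?_⟩
    rw [hbeq]
    simp [List.append_assoc]
  · -- b = a₃ ++ b₂
    obtain ⟨b₁, a₁, a₂, hb₁, ha₁, ha₂, haeq⟩ := destructA ha
    have hla : a.length = Nat.fib (2*k+4) := lenA' ha
    have hlb₁ : b₁.length = Nat.fib (2*k+1) := lenB hb₁
    have hla₁ : a₁.length = Nat.fib (2*k+2) := lenA ha₁
    have hla₂ : a₂.length = Nat.fib (2*k+2) := lenA ha₂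
    have hla₃ : a₃.length = Nat.fib (2*k+2) := lenA ha₃
    rw [factor_iff_drop_take] at hf
    obtain ⟨i, hbound, hx⟩ := hf
    by_cases hc1 : i + x.length ≤ Nat.fib (2*k+4)
    · -- window inside a
      have hfac : IsFactor x a := window_left_factor hx (by omega)
      refine ⟨X ++ (a ++ a), memA_succ (n := k+1) hX ha ha, ?_⟩
      exact factor_trans hfac ⟨X, a, by simp⟩
    · have hW : a ++ b = (b₁ ++ a₁) ++ (a₂ ++ (a₃ ++ b₂)) := by
        rw [haeq, hbeq]; simp
      rw [hW] at hx
      by_cases hc2 : i ≤ Nat.fib (2*k+1) + Nat.fib (2*k+2)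
      · -- middle windows: x = s ++ a₂ ++ t
        have hmid := extract_mid hx
          (by simp only [List.length_append, hlb₁, hla₁]; omega)
          (by simp only [List.length_append, hlb₁, hla₁, hla₂]; omega)
        set t : Word := (a₃ ++ b₂).take (i + x.length - (b₁ ++ a₁).length - a₂.length)
          with ht_def
        set s : Word := (b₁ ++ a₁).drop i with hs_def
        have hs : s <:+ b₁ ++ a₁ := List.drop_suffix i (b₁ ++ a₁)
        have hxst : x = s ++ (a₂ ++ t) := by rw [hmid, List.append_assoc]
        by_cases hc3 : Nat.fib (2*k+2) + 1 ≤ i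
        · -- short s : realize s as a suffix of a B_{k+1} word (slot a¹)
          have hls : s.length + i = Nat.fib (2*k+1) + Nat.fib (2*k+2) := by
            rw [hs_def, List.length_drop]
            simp only [List.length_append, hlb₁, hla₁]
            omega
          have hsa₁ : s <:+ a₁ := suffix_shrink hs (by omega)
          obtain ⟨b0, hb0, hsb0⟩ := lemS k s a₁ ha₁ hsa₁ (by omega)
          obtain ⟨a4, ha4⟩ := nonemptyA k
          refine ⟨X ++ ((b0 ++ (a₂ ++ a₃)) ++ (b₂ ++ (a4 ++ a4))),
            memA_succ (n := k+1) hX (memA_succ hb0 ha₂ ha₃) (memA_succ hb₂ ha4 ha4), ?_⟩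
          have ht : t <+: a₃ ++ (b₂ ++ (a4 ++ a4)) := by
            have h1 : t <+: a₃ ++ b₂ := List.take_prefix _ _
            have h2 := prefix_append_right h1 (a4 ++ a4)
            rwa [List.append_assoc] at h2
          have hfac : IsFactor (s ++ (a₂ ++ t))
              ((X ++ b0) ++ (a₂ ++ (a₃ ++ (b₂ ++ (a4 ++ a4))))) :=
            infix_of_suffix_prefix (suffix_append_left hsb0 X)
              (prefix_append_prefix ht a₂)
          rw [hxst]
          convert hfac using 1
          simp [List.append_assoc]
        · -- long s : t is short, realize t as a prefix of an A_{k+2} word (slot a²)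
          have hli : i + x.length - (b₁ ++ a₁).length - a₂.length + 1 ≤ Nat.fib (2*k+2) := by
            simp only [List.length_append, hlb₁, hla₁, hla₂]
            omega
          have ht3 : t <+: a₃ := by
            rw [ht_def, take_append_left_of_le (by omega : _ ≤ a₃.length)]
            exact List.take_prefix _ _
          have hlt : t.length + 1 ≤ Nat.fib (2*k+2) := by
            rw [ht_def, List.length_take]
            simp only [List.length_append, hla₃]
            omega
          obtain ⟨ap, hap, htap⟩ := lemP' k t a₃ ha₃ ht3 hlt
          refine ⟨X ++ ((b₁ ++ (a₁ ++ a₂)) ++ ap),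
            memA_succ (n := k+1) hX (memA_succ hb₁ ha₁ ha₂) hap, ?_⟩
          have hfac : IsFactor (s ++ (a₂ ++ t)) ((X ++ (b₁ ++ a₁)) ++ (a₂ ++ ap)) :=
            infix_of_suffix_prefix (suffix_append_left hs X)
              (prefix_append_prefix htap a₂)
          rw [hxst]
          convert hfac using 1
          simp [List.append_assoc]
      · -- right windows: x inside a₂ a₃ b₂
        have hfac : IsFactor x (a₂ ++ (a₃ ++ b₂)) := window_right_factor hx
          (by simp only [List.length_append, hlb₁, hla₁]; omega)
        obtain ⟨b0, hb0⟩ := nonemptyB k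
        obtain ⟨a4, ha4⟩ := nonemptyA k
        refine ⟨X ++ ((b0 ++ (a₂ ++ a₃)) ++ (b₂ ++ (a4 ++ a4))),
          memA_succ (n := k+1) hX (memA_succ hb0 ha₂ ha₃) (memA_succ hb₂ ha4 ha4), ?_⟩
        refine factor_trans hfac ⟨X ++ b0, a4 ++ a4, ?_⟩
        simp [List.append_assoc]

end FibAux

open FibAux

theorem factors_Aset_eq_factors_Bset (n : ℕ) (hn : 1 ≤ n) :
    FactorSet (Aset (n + 1)) (Nat.fib (2 * n) - 1) =
      FactorSet (Bset (n + 1)) (Nat.fib (2 * n) - 1) := by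
  match n, hn with
  | 1, _ =>
    -- here the factor length is 0
    have hm : Nat.fib (2*1) - 1 = 0 := by norm_num
    rw [hm]
    ext x
    simp only [FactorSet, Set.mem_setOf_eq]
    constructor
    · rintro ⟨hl, -⟩
      obtain ⟨b, hb⟩ := nonemptyB 1
      exact ⟨hl, b, hb, [], b, by simp [List.length_eq_zero_iff.mp hl]⟩
    · rintro ⟨hl, -⟩
      obtain ⟨a, ha⟩ := nonemptyA 1
      exact ⟨hl, a, ha, [], a, by simp [List.length_eq_zero_iff.mp hl]⟩
  | (k+2), _ =>
    have h24 : 2*(k+2) = 2*k+4 := by ring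
    rw [h24]
    have hpos : 0 < Nat.fib (2*k+4) := Nat.fib_pos.mpr (by omega)
    have hfib4 : Nat.fib (2*k+4) = Nat.fib (2*k+2) + Nat.fib (2*k+3) := by
      have h : Nat.fib (2*k+2+2) = Nat.fib (2*k+2) + Nat.fib (2*k+3) := Nat.fib_add_two
      simpa using h
    ext x
    simp only [FactorSet, Set.mem_setOf_eq]
    constructor
    · rintro ⟨hl, w, hw, hf⟩
      refine ⟨hl, ?_⟩
      obtain ⟨bb, a, a', hbb, ha, ha', rfl⟩ := destructA (n := k+1) hw
      have hlbb : bb.length = Nat.fib (2*k+3) := lenB' hbb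
      have hla : a.length = Nat.fib (2*k+4) := lenA' ha
      have hlx : x.length + 1 = Nat.fib (2*k+4) := by omega
      rw [factor_iff_drop_take] at hf
      obtain ⟨i, hbound, hx⟩ := hf
      by_cases hc : i + x.length ≤ Nat.fib (2*k+3) + Nat.fib (2*k+4)
      · have hsp : bb ++ (a ++ a') = (bb ++ a) ++ a' := by simp
        rw [hsp] at hx
        have hfac : IsFactor x (bb ++ a) := window_left_factor hx
          (by simp only [List.length_append, hlbb, hla]; omega)
        exact ⟨bb ++ a, memB_succ_right (n := k+1) hbb ha, hfac⟩
      · have hfac : IsFactor x (a ++ a') := window_right_factor hx (by omega)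
        exact lem1 ha ha' hfac hlx
    · rintro ⟨hl, w, hw, hf⟩
      refine ⟨hl, ?_⟩
      have hlx : x.length + 1 = Nat.fib (2*k+4) := by omega
      rcases destructB (n := k+1) hw with ⟨a, c, ha, hc, rfl⟩ | ⟨c, a, hc, ha, rfl⟩
      · exact lem2 ha hc hf hlx
      · obtain ⟨a0, ha0⟩ := nonemptyA (k+1)
        refine ⟨c ++ (a ++ a0), memA_succ (n := k+1) hc ha ha0, ?_⟩
        exact factor_trans hf ⟨[], a0, by simp⟩
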